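/- Let Q be a random s×s real matrix distributed according to the Haar probability measure on the orthogonal group O(s). Then for all index sets S, T, U, V ⊆ {1,…,s} with |S| = |T| = i and |U| = |V| = ℓ, E[ [Q]_{S,T} · [Q]_{U,V} ] = (1/binom(s,i)) · 1_{S=U} · 1_{T=V}. In particular, a uniformly random orthonormal r-frame in ℝ^s (the first r columns of a Haar-random element of O(s)) satisfies the same identity for T, V ⊆ {1,…,r}. -/

import Mathlib

open Matrix MeasureTheory

noncomputable instance matMeasurableSpace (m n : ℕ) :
    MeasurableSpace (Matrix (Fin m) (Fin n) ℝ) :=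
  MeasurableSpace.pi

/-- The minor `[C]_{S,T}` : the determinant of the submatrix of `C` with rows indexed by
`S` and columns by `T` (in increasing order); junk value `0` if `|S| ≠ |T|`, and the empty
minor equals `1`. -/
noncomputable def minor {m n : ℕ} (C : Matrix (Fin m) (Fin n) ℝ)
    (S : Finset (Fin m)) (T : Finset (Fin n)) : ℝ :=
  if h : S.card = T.card then
    (Matrix.of fun (i j : Fin S.card) =>
      C (S.orderEmbOfFin rfl i) (T.orderEmbOfFin h.symm j)).det
  else 0

/-- A probability measure on `s × s` real matrices is the *Haar distribution on `O(s)`* iff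
it is supported on orthogonal matrices and invariant under left translation by every
orthogonal matrix (this characterizes the Haar probability measure of the compact group
`O(s)`). -/
def IsHaarOrthogonal {s : ℕ} (μ : Measure (Matrix (Fin s) (Fin s) ℝ)) : Prop :=
  IsProbabilityMeasure μ ∧
  (∀ᵐ Q ∂μ, Qᵀ * Q = 1) ∧
  ∀ U : Matrix (Fin s) (Fin s) ℝ, Uᵀ * U = 1 → μ.map (fun Q => U * Q) = μ

/-!
Left invariance of `μ` under orthogonal matrices gives two symmetries of
`E[[Q]_{S,T} [Q]_{U,V}]`. Flipping the sign of a row in `S ∆ U` negates the integrand, so the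
expectation vanishes unless `S = U`; permuting rows shows that `E[[Q]_{S,T} [Q]_{S,V}]` does not
depend on the `i`-set `S`. Summing over all `binom(s,i)` such `S`, the Cauchy–Binet formula turns
the sum into `[QᵀQ]_{T,V} = [1]_{T,V} = 1_{T=V}`. Restricting to the first `r` columns only
relabels column sets.
-/

open Finset

theorem Fintype.sum_eq_sum_orderEmbedding_perm {α M : Type*} [LinearOrder α] [Fintype α]
    [AddCommMonoid M] {n : ℕ} (F : (Fin n → α) → M)
    (hF : ∀ p, ¬ Function.Injective p → F p = 0) :
    ∑ p, F p = ∑ x : (Fin n ↪o α) × Equiv.Perm (Fin n), F (x.1 ∘ x.2) := by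
  symm
  refine sum_bij_ne_zero (fun x _ _ => x.1 ∘ x.2) (fun _ _ _ => mem_univ _) ?_ ?_
    fun _ _ _ => rfl
  · rintro ⟨f, σ⟩ - - ⟨g, τ⟩ - - h
    dsimp only at h
    have hfg : f = g := by
      have hrange := congrArg Set.range h
      rwa [σ.surjective.range_comp, τ.surjective.range_comp, OrderEmbedding.range_inj] at hrange
    subst hfg
    exact Prod.ext rfl (Equiv.ext fun j => f.injective (congrFun h j))
  · intro p _ hp
    have hinj : Function.Injective p := by
      contrapose! hp
      exact hF p hp
    let f : Fin n ↪o α := OrderEmbedding.ofStrictMono _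
      ((Tuple.monotone_sort p).strictMono_of_injective (hinj.comp (Tuple.sort p).injective))
    have hf : f ∘ (Tuple.sort p).symm = p := funext fun j => by simp [f]
    exact ⟨(f, (Tuple.sort p).symm), mem_univ _, by simpa only [hf] using hp, hf⟩

namespace Matrix

variable {R : Type*} [CommRing R] {i k : ℕ}

theorem det_mul_eq_sum_det_submatrix_mul_prod (A : Matrix (Fin i) (Fin k) R)
    (B : Matrix (Fin k) (Fin i) R) :
    (A * B).det = ∑ p : Fin i → Fin k, (A.submatrix id p).det * ∏ j, B (p j) j := by
  simp only [det_apply', mul_apply, prod_univ_sum, Finset.mul_sum, Finset.sum_mul,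
    Fintype.piFinset_univ, submatrix_apply, id]
  rw [Finset.sum_comm]
  refine sum_congr rfl fun p _ => sum_congr rfl fun σ _ => ?_
  rw [prod_mul_distrib]
  ring

theorem det_mul_eq_sum_orderEmbedding (A : Matrix (Fin i) (Fin k) R)
    (B : Matrix (Fin k) (Fin i) R) :
    (A * B).det = ∑ f : Fin i ↪o Fin k, (A.submatrix id f).det * (B.submatrix f id).det := by
  have hperm (f : Fin i ↪o Fin k) (σ : Equiv.Perm (Fin i)) :
      (A.submatrix id (f ∘ σ)).det = Equiv.Perm.sign σ * (A.submatrix id f).det := by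
    rw [← det_permute', submatrix_submatrix, Function.comp_id]
  rw [det_mul_eq_sum_det_submatrix_mul_prod, Fintype.sum_eq_sum_orderEmbedding_perm,
    Fintype.sum_prod_type]
  · refine sum_congr rfl fun f _ => ?_
    simp only [hperm, det_apply' (B.submatrix f id), submatrix_apply, id, Function.comp_apply,
      Finset.mul_sum]
    refine sum_congr rfl fun σ _ => ?_
    ring
  · intro p hp
    obtain ⟨a, b, hab, hne⟩ := Function.not_injective_iff.mp hp
    rw [det_zero_of_column_eq hne fun r => by simp [hab], zero_mul]

end Matrix

theorem minor_eq_det_submatrix {m n i : ℕ} (C : Matrix (Fin m) (Fin n) ℝ) {S : Finset (Fin m)}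
    {T : Finset (Fin n)} (hS : S.card = i) (hT : T.card = i) :
    minor C S T = (C.submatrix (S.orderEmbOfFin hS) (T.orderEmbOfFin hT)).det := by
  subst hS
  exact dif_pos hT.symm

theorem minor_of_card_ne {m n : ℕ} (C : Matrix (Fin m) (Fin n) ℝ) {S : Finset (Fin m)}
    {T : Finset (Fin n)} (h : S.card ≠ T.card) : minor C S T = 0 :=
  dif_neg h

theorem continuous_minor {m n : ℕ} (S : Finset (Fin m)) (T : Finset (Fin n)) :
    Continuous fun C : Matrix (Fin m) (Fin n) ℝ => minor C S T := by
  unfold minor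
  split_ifs
  · fun_prop
  · exact continuous_const

theorem minor_transpose {m n : ℕ} (C : Matrix (Fin m) (Fin n) ℝ) (S : Finset (Fin m))
    (T : Finset (Fin n)) : minor Cᵀ T S = minor C S T := by
  by_cases h : S.card = T.card
  · rw [minor_eq_det_submatrix Cᵀ rfl h, minor_eq_det_submatrix C h rfl, ← det_transpose]
    rfl
  · rw [minor_of_card_ne _ h, minor_of_card_ne _ (Ne.symm h)]

/-- Cauchy–Binet formula for minors. -/
theorem minor_mul {m k n i : ℕ} (A : Matrix (Fin m) (Fin k) ℝ) (B : Matrix (Fin k) (Fin n) ℝ)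
    {T : Finset (Fin m)} (V : Finset (Fin n)) (hT : T.card = i) :
    minor (A * B) T V =
      ∑ S : Set.powersetCard (Fin k) i, minor A T S * minor B S V := by
  by_cases hV : V.card = i
  · rw [minor_eq_det_submatrix _ hT hV, submatrix_mul _ _ _ id _ Function.bijective_id,
      det_mul_eq_sum_orderEmbedding, ← Set.powersetCard.ofFinEmbEquiv.symm.sum_comp]
    refine Fintype.sum_congr _ _ fun S => ?_
    rw [minor_eq_det_submatrix _ hT S.prop, minor_eq_det_submatrix _ S.prop hV]
    rfl
  · rw [minor_of_card_ne _ (by rw [hT]; exact Ne.symm hV)]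
    refine (Fintype.sum_eq_zero _ fun S => ?_).symm
    rw [minor_of_card_ne B (by rw [Set.powersetCard.card_eq]; exact Ne.symm hV), mul_zero]

theorem minor_diagonal {s : ℕ} (v : Fin s → ℝ) (S U : Finset (Fin s)) :
    minor (diagonal v) S U = if S = U then ∏ a ∈ S, v a else 0 := by
  split_ifs with hSU
  · subst hSU
    rw [minor_eq_det_submatrix _ rfl rfl, submatrix_diagonal _ _ (orderEmbOfFin S rfl).injective,
      det_diagonal]
    conv_rhs => rw [← S.map_orderEmbOfFin_univ rfl, prod_map]
    rfl
  by_cases hcard : S.card = U.card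
  · obtain ⟨a, haS, haU⟩ : ∃ a ∈ S, a ∉ U := by
      by_contra! hSU'
      exact hSU (eq_of_subset_of_card_le hSU' hcard.ge)
    obtain ⟨k₀, hk₀⟩ : a ∈ Set.range (S.orderEmbOfFin rfl) := by
      rwa [range_orderEmbOfFin]
    rw [minor_eq_det_submatrix _ rfl hcard.symm]
    refine det_eq_zero_of_row_eq_zero k₀ fun l => ?_
    rw [submatrix_apply, hk₀, diagonal_apply_ne]
    exact fun h => haU (h ▸ orderEmbOfFin_mem U _ l)
  · exact minor_of_card_ne _ hcard

theorem minor_one {s : ℕ} (S U : Finset (Fin s)) :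
    minor (1 : Matrix (Fin s) (Fin s) ℝ) S U = if S = U then 1 else 0 := by
  rw [← diagonal_one, minor_diagonal, prod_const_one]

theorem minor_diagonal_mul {s n : ℕ} (v : Fin s → ℝ) (Q : Matrix (Fin s) (Fin n) ℝ)
    (S : Finset (Fin s)) (T : Finset (Fin n)) :
    minor (diagonal v * Q) S T = (∏ a ∈ S, v a) * minor Q S T := by
  rw [minor_mul _ _ T rfl, Fintype.sum_eq_single (Set.powersetCard.ofCard rfl)]
  · rw [minor_diagonal, Set.powersetCard.val_ofCard, if_pos rfl]
  · intro S' hS'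
    rw [minor_diagonal, if_neg fun h => hS' (Subtype.ext h.symm), zero_mul]

theorem sum_minor_mul_minor_of_transpose_mul_self {m n i : ℕ} {Q : Matrix (Fin m) (Fin n) ℝ}
    (hQ : Qᵀ * Q = 1) {T : Finset (Fin n)} (V : Finset (Fin n)) (hT : T.card = i) :
    ∑ S : Set.powersetCard (Fin m) i, minor Q S T * minor Q S V = if T = V then 1 else 0 := by
  simp_rw [← minor_one, ← hQ, minor_mul _ _ V hT, minor_transpose]

theorem abs_minor_le_one_of_transpose_mul_self {m n : ℕ} {Q : Matrix (Fin m) (Fin n) ℝ}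
    (hQ : Qᵀ * Q = 1) (S : Finset (Fin m)) (T : Finset (Fin n)) : |minor Q S T| ≤ 1 := by
  by_cases h : S.card = T.card
  · rw [abs_le_one_iff_mul_self_le_one]
    calc minor Q S T * minor Q S T
        ≤ ∑ S' : Set.powersetCard (Fin m) T.card, minor Q S' T * minor Q S' T :=
          single_le_sum (f := fun S' : Set.powersetCard (Fin m) T.card =>
            minor Q S' T * minor Q S' T) (fun _ _ => mul_self_nonneg _)
            (mem_univ (Set.powersetCard.ofCard h))
      _ = 1 := by rw [sum_minor_mul_minor_of_transpose_mul_self hQ T rfl, if_pos rfl]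
  · rw [minor_of_card_ne _ h, abs_zero]
    exact zero_le_one

theorem exists_perm_comp_orderEmbOfFin {α : Type*} [Fintype α] [LinearOrder α]
    {S S' : Finset α} {i : ℕ} (hS : S.card = i) (hS' : S'.card = i) :
    ∃ σ : Equiv.Perm α, σ ∘ S.orderEmbOfFin hS = S'.orderEmbOfFin hS' := by
  let e : S ≃ S' := (S.orderIsoOfFin hS).symm.toEquiv.trans (S'.orderIsoOfFin hS').toEquiv
  refine ⟨e.extendSubtype, funext fun k => ?_⟩
  rw [Function.comp_apply, e.extendSubtype_apply_of_mem _ (orderEmbOfFin_mem S hS k)]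
  have hk : (⟨S.orderEmbOfFin hS k, orderEmbOfFin_mem S hS k⟩ : S) = S.orderIsoOfFin hS k :=
    Subtype.ext (S.coe_orderIsoOfFin_apply hS k).symm
  simp [e, hk]

theorem minor_permMatrix_mul {s n i : ℕ} (Q : Matrix (Fin s) (Fin n) ℝ) (σ : Equiv.Perm (Fin s))
    {S S' : Finset (Fin s)} (T : Finset (Fin n)) (hS : S.card = i) (hS' : S'.card = i)
    (hσ : σ ∘ S.orderEmbOfFin hS = S'.orderEmbOfFin hS') :
    minor (σ.permMatrix ℝ * Q) S T = minor Q S' T := by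
  by_cases hT : T.card = i
  · rw [Equiv.Perm.permMatrix, PEquiv.toMatrix_toPEquiv_mul, minor_eq_det_submatrix _ hS hT,
      minor_eq_det_submatrix _ hS' hT, submatrix_submatrix, Function.id_comp, hσ]
  · rw [minor_of_card_ne _ (by rw [hS]; exact Ne.symm hT),
      minor_of_card_ne _ (by rw [hS']; exact Ne.symm hT)]

theorem permMatrix_transpose_mul_self {s : ℕ} (σ : Equiv.Perm (Fin s)) :
    (σ.permMatrix ℝ)ᵀ * σ.permMatrix ℝ = 1 := by
  rw [transpose_permMatrix, ← permMatrix_mul, mul_inv_cancel, permMatrix_one]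

theorem minor_submatrix_orderEmbedding {m n r : ℕ} (C : Matrix (Fin m) (Fin n) ℝ)
    (g : Fin r ↪o Fin n) (S : Finset (Fin m)) (T : Finset (Fin r)) :
    minor (C.submatrix id g) S T = minor C S (T.map g.toEmbedding) := by
  by_cases h : S.card = T.card
  · have hmap : (T.map g.toEmbedding).card = T.card := card_map _
    rw [minor_eq_det_submatrix _ h rfl, minor_eq_det_submatrix _ h hmap, submatrix_submatrix]
    have hsort : (T.map g.toEmbedding).orderEmbOfFin hmap = (T.orderEmbOfFin rfl).trans g :=
      (orderEmbOfFin_unique' hmap fun k => mem_map_of_mem _ (orderEmbOfFin_mem T rfl k)).symm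
    rw [hsort]
    rfl
  · rw [minor_of_card_ne _ h, minor_of_card_ne _ (by rwa [card_map])]

instance matBorelSpace (m n : ℕ) : BorelSpace (Matrix (Fin m) (Fin n) ℝ) :=
  inferInstanceAs (BorelSpace (Fin m → Fin n → ℝ))

namespace IsHaarOrthogonal

variable {s : ℕ} {μ : Measure (Matrix (Fin s) (Fin s) ℝ)}

theorem integral_comp_mul_left (hμ : IsHaarOrthogonal μ) {U : Matrix (Fin s) (Fin s) ℝ}
    (hU : Uᵀ * U = 1) {f : Matrix (Fin s) (Fin s) ℝ → ℝ} (hf : Measurable f) :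
    ∫ Q, f (U * Q) ∂μ = ∫ Q, f Q ∂μ := by
  conv_rhs => rw [← hμ.2.2 U hU]
  exact (integral_map (continuous_const.mul continuous_id).aemeasurable
    hf.aestronglyMeasurable).symm

theorem integrable_minor_mul_minor (hμ : IsHaarOrthogonal μ) (S T U V : Finset (Fin s)) :
    Integrable (fun Q => minor Q S T * minor Q U V) μ := by
  have := hμ.1
  refine .of_bound ((continuous_minor S T).mul (continuous_minor U V)).aestronglyMeasurable 1 ?_
  filter_upwards [hμ.2.1] with Q hQ
  rw [Real.norm_eq_abs, abs_mul, ← one_mul 1]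
  exact mul_le_mul (abs_minor_le_one_of_transpose_mul_self hQ S T)
    (abs_minor_le_one_of_transpose_mul_self hQ U V) (abs_nonneg _) zero_le_one

theorem integral_minor_mul_minor_of_ne (hμ : IsHaarOrthogonal μ) {S U : Finset (Fin s)}
    (T V : Finset (Fin s)) (hSU : S ≠ U) : ∫ Q, minor Q S T * minor Q U V ∂μ = 0 := by
  obtain ⟨a, ha⟩ : ∃ a, a ∈ symmDiff S U := symmDiff_nonempty.mpr hSU
  let v : Fin s → ℝ := fun x => if x = a then -1 else 1
  have hv : diagonal v * diagonal v = 1 := by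
    rw [diagonal_mul_diagonal, ← diagonal_one]
    congr 1
    ext x
    by_cases hx : x = a <;> simp [v, hx]
  have hsign : (∏ x ∈ S, v x) * ∏ x ∈ U, v x = -1 := by
    rw [Finset.mem_symmDiff] at ha
    rcases ha with ⟨haS, haU⟩ | ⟨haU, haS⟩ <;> simp [v, prod_ite_eq', haS, haU]
  have hflip := hμ.integral_comp_mul_left (U := diagonal v) (by rwa [diagonal_transpose])
    (f := fun Q => minor Q S T * minor Q U V)
    ((continuous_minor S T).mul (continuous_minor U V)).measurable
  have hneg (Q : Matrix (Fin s) (Fin s) ℝ) :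
      minor (diagonal v * Q) S T * minor (diagonal v * Q) U V = -(minor Q S T * minor Q U V) := by
    rw [minor_diagonal_mul, minor_diagonal_mul]
    linear_combination (minor Q S T * minor Q U V) * hsign
  simp only [hneg, integral_neg] at hflip
  linarith

theorem integral_minor_mul_minor_eq_of_card_eq (hμ : IsHaarOrthogonal μ)
    {S S' : Finset (Fin s)} (T V : Finset (Fin s)) (h : S.card = S'.card) :
    ∫ Q, minor Q S T * minor Q S V ∂μ = ∫ Q, minor Q S' T * minor Q S' V ∂μ := by
  obtain ⟨σ, hσ⟩ := exists_perm_comp_orderEmbOfFin h rfl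
  rw [← hμ.integral_comp_mul_left (permMatrix_transpose_mul_self σ)
    (f := fun Q => minor Q S T * minor Q S V)
    ((continuous_minor S T).mul (continuous_minor S V)).measurable]
  simp only [minor_permMatrix_mul _ σ _ h rfl hσ]

theorem integral_minor_mul_minor_self (hμ : IsHaarOrthogonal μ) {S T : Finset (Fin s)}
    (V : Finset (Fin s)) {i : ℕ} (hS : S.card = i) (hT : T.card = i) :
    ∫ Q, minor Q S T * minor Q S V ∂μ = if T = V then ((s.choose i : ℕ) : ℝ)⁻¹ else 0 := by
  have := hμ.1
  have hsum : ∑ S' : Set.powersetCard (Fin s) i, ∫ Q, minor Q S' T * minor Q S' V ∂μ =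
      if T = V then 1 else 0 := by
    rw [← integral_finsetSum _ fun (S' : Set.powersetCard (Fin s) i) _ =>
        hμ.integrable_minor_mul_minor S' T S' V,
      integral_congr_ae (hμ.2.1.mono fun Q hQ =>
        sum_minor_mul_minor_of_transpose_mul_self hQ V hT)]
    split_ifs <;> simp
  have hcard : Fintype.card (Set.powersetCard (Fin s) i) = s.choose i := by
    rw [← Nat.card_eq_fintype_card, Set.powersetCard.card, Nat.card_eq_fintype_card,
      Fintype.card_fin]
  have hchoose : ((s.choose i : ℕ) : ℝ) ≠ 0 := by
    have := card_le_univ T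
    rw [hT, Fintype.card_fin] at this
    exact_mod_cast (Nat.choose_pos this).ne'
  rw [Fintype.sum_congr _ _ fun S' => hμ.integral_minor_mul_minor_eq_of_card_eq T V
    ((Set.powersetCard.card_eq S').trans hS.symm), sum_const, card_univ, hcard, nsmul_eq_mul]
    at hsum
  split_ifs at hsum ⊢
  · exact eq_inv_of_mul_eq_one_right hsum
  · exact (mul_eq_zero.mp hsum).resolve_left hchoose

theorem integral_minor_mul_minor (hμ : IsHaarOrthogonal μ) {S T : Finset (Fin s)}
    (U V : Finset (Fin s)) {i : ℕ} (hS : S.card = i) (hT : T.card = i) :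
    ∫ Q, minor Q S T * minor Q U V ∂μ =
      if S = U ∧ T = V then ((s.choose i : ℕ) : ℝ)⁻¹ else 0 := by
  by_cases hSU : S = U
  · subst hSU
    rw [hμ.integral_minor_mul_minor_self V hS hT]
    simp
  · rw [hμ.integral_minor_mul_minor_of_ne T V hSU, if_neg (not_and_of_not_left _ hSU)]

end IsHaarOrthogonal

/-- **Minor-orthogonality of Haar-random orthogonal matrices.**
If `Q` is Haar-distributed on `O(s)`, then
`E[[Q]_{S,T}·[Q]_{U,V}] = 1_{S=U}·1_{T=V}/binom(s,|S|)`; in particular the uniformly random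
orthonormal `r`-frame given by the first `r` columns of `Q` satisfies the same identity for
column sets `T, V ⊆ {1,…,r}`. -/
theorem haar_orthogonal_minor_orthogonal
    (s : ℕ) (μ : Measure (Matrix (Fin s) (Fin s) ℝ)) (hμ : IsHaarOrthogonal μ) :
    (∀ (S T U V : Finset (Fin s)) (i ℓ : ℕ),
      S.card = i → T.card = i → U.card = ℓ → V.card = ℓ →
      ∫ Q, minor Q S T * minor Q U V ∂μ =
        if S = U ∧ T = V then ((s.choose i : ℕ) : ℝ)⁻¹ else 0) ∧
    ∀ (r : ℕ) (hrs : r ≤ s) (S U : Finset (Fin s)) (T V : Finset (Fin r)) (i ℓ : ℕ),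
      S.card = i → T.card = i → U.card = ℓ → V.card = ℓ →
      ∫ Q, minor (Matrix.of fun (a : Fin s) (b : Fin r) => Q a (Fin.castLE hrs b)) S T *
          minor (Matrix.of fun (a : Fin s) (b : Fin r) => Q a (Fin.castLE hrs b)) U V ∂μ =
        if S = U ∧ T = V then ((s.choose i : ℕ) : ℝ)⁻¹ else 0 := by
  refine ⟨fun S T U V i ℓ hS hT _ _ => hμ.integral_minor_mul_minor U V hS hT, ?_⟩
  intro r hrs S U T V i ℓ hS hT _ _
  let g := Fin.castLEOrderEmb hrs
  simp_rw [show ∀ Q : Matrix (Fin s) (Fin s) ℝ,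
      (Matrix.of fun (a : Fin s) (b : Fin r) => Q a (Fin.castLE hrs b)) = Q.submatrix id g
    from fun _ => rfl, minor_submatrix_orderEmbedding]
  rw [hμ.integral_minor_mul_minor _ _ hS (by rw [card_map, hT])]
  simp only [map_inj]
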